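/- arXiv:1308.3214 — 7 statements merged into one kernel-verified Lean document; each statement's English description precedes it below -/
import Mathlib

section
/- Let P ≥ 1 be an integer and β > 0 a real number such that A_p(β) ≤ 0 for all integers 1 ≤ p ≤ P and ∑_{p=1}^{P} (−A_p(β)) ≤ 4. Then for every real D̂ with 0 ≤ D̂ ≤ 1, every complex number ρ satisfying the characteristic equation ρ² − 2ρ + 1 = ρ · ∑_{p=1}^{P} A_p(β) D̂^p has modulus |ρ| ≤ 1. -/
/-- The coefficients of the order-2P multiderivative wave scheme:
`A p β = 2 ∑_{m=1}^{p} (−1)^m (β^{2m}/(2m)!) · C(p−1, m−1)`. -/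
noncomputable def A (p : ℕ) (β : ℝ) : ℝ :=
  2 * ∑ m ∈ Finset.Icc 1 p,
    (-1 : ℝ) ^ m * β ^ (2 * m) / (Nat.factorial (2 * m)) * ((p - 1).choose (m - 1))

/-! With `ρ ^ 2 - 2ρ + 1 = ρ S` the characteristic polynomial is `ρ ^ 2 - (2 + S) ρ + 1`, whose
roots have product `1`. The sign conditions on the `A p β` give `-4 ≤ S ≤ 0`, i.e. `|2 + S| ≤ 2`,
so the discriminant `(2 + S) ^ 2 - 4` is nonpositive: the roots are complex conjugate (or a double
real root), hence both of modulus `1`. -/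

open Finset

theorem Complex.norm_eq_one_of_sq_sub_mul_add_one_eq_zero {c : ℝ} (hc : |c| ≤ 2) {ρ : ℂ}
    (hρ : ρ ^ 2 - c * ρ + 1 = 0) : ‖ρ‖ = 1 := by
  obtain ⟨hc₁, hc₂⟩ := abs_le.mp hc
  have hre : ρ.re ^ 2 - ρ.im ^ 2 - c * ρ.re + 1 = 0 := by
    simpa [sq] using congrArg Complex.re hρ
  have him : (2 * ρ.re - c) * ρ.im = 0 := by
    have := congrArg Complex.im hρ
    simp only [sq, Complex.add_im, Complex.sub_im, Complex.mul_im, Complex.ofReal_re,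
      Complex.ofReal_im, Complex.one_im, Complex.zero_im] at this
    linarith
  have hnormSq : ρ.re ^ 2 + ρ.im ^ 2 = 1 := by
    rcases mul_eq_zero.mp him with hx | hy
    · nlinarith
    · rw [hy] at hre ⊢
      have hdisc : (2 * ρ.re - c) ^ 2 = c ^ 2 - 4 := by linear_combination 4 * hre
      have hx : 2 * ρ.re - c = 0 := by nlinarith
      nlinarith
  rw [Complex.norm_eq_sqrt_sq_add_sq, hnormSq, Real.sqrt_one]

theorem Finset.sum_le_sum_mul_pow_of_nonpos {s : Finset ℕ} {a : ℕ → ℝ} (ha : ∀ p ∈ s, a p ≤ 0)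
    {D : ℝ} (hD₀ : 0 ≤ D) (hD₁ : D ≤ 1) : ∑ p ∈ s, a p ≤ ∑ p ∈ s, a p * D ^ p := by
  refine sum_le_sum fun p hp => ?_
  nlinarith [ha p hp, pow_le_one₀ hD₀ hD₁ (n := p)]

theorem Finset.sum_mul_pow_nonpos {s : Finset ℕ} {a : ℕ → ℝ} (ha : ∀ p ∈ s, a p ≤ 0)
    {D : ℝ} (hD₀ : 0 ≤ D) : ∑ p ∈ s, a p * D ^ p ≤ 0 :=
  sum_nonpos fun p hp => mul_nonpos_of_nonpos_of_nonneg (ha p hp) (pow_nonneg hD₀ p)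

theorem stmt_2_general (P : ℕ) (β : ℝ)
    (hneg : ∀ p : ℕ, 1 ≤ p → p ≤ P → A p β ≤ 0)
    (hsum : ∑ p ∈ Finset.Icc 1 P, (-(A p β)) ≤ 4) :
    ∀ D : ℝ, 0 ≤ D → D ≤ 1 →
      ∀ ρ : ℂ, ρ ^ 2 - 2 * ρ + 1 = ρ * ∑ p ∈ Finset.Icc 1 P, (A p β : ℂ) * (D : ℂ) ^ p →
        ‖ρ‖ ≤ 1 := by
  intro D hD₀ hD₁ ρ hρ
  set S : ℝ := ∑ p ∈ Icc 1 P, A p β * D ^ p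
  have hA : ∀ p ∈ Icc 1 P, A p β ≤ 0 := fun p hp => hneg p (mem_Icc.mp hp).1 (mem_Icc.mp hp).2
  have hS_le : S ≤ 0 := sum_mul_pow_nonpos hA hD₀
  have hS_ge : -4 ≤ S := by
    have := sum_le_sum_mul_pow_of_nonpos hA hD₀ hD₁
    rw [sum_neg_distrib] at hsum
    linarith
  have hchar : ρ ^ 2 - ((2 + S : ℝ) : ℂ) * ρ + 1 = 0 := by
    have hcast : ((S : ℝ) : ℂ) = ∑ p ∈ Icc 1 P, (A p β : ℂ) * (D : ℂ) ^ p := by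
      push_cast [S]; rfl
    push_cast
    linear_combination hρ - ρ * hcast
  exact (Complex.norm_eq_one_of_sq_sub_mul_add_one_eq_zero
    (abs_le.mpr ⟨by linarith, by linarith⟩) hchar).le

theorem stmt_2 (P : ℕ) (hP : 1 ≤ P) (β : ℝ) (hβ : 0 < β)
    (hneg : ∀ p : ℕ, 1 ≤ p → p ≤ P → A p β ≤ 0)
    (hsum : ∑ p ∈ Finset.Icc 1 P, (-(A p β)) ≤ 4) :
    ∀ D : ℝ, 0 ≤ D → D ≤ 1 →
      ∀ ρ : ℂ, ρ ^ 2 - 2 * ρ + 1 = ρ * ∑ p ∈ Finset.Icc 1 P, (A p β : ℂ) * (D : ℂ) ^ p →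
        ‖ρ‖ ≤ 1 :=
  stmt_2_general P β hneg hsum
end

section
/- For every real β > 0 and every real x with 0 ≤ x < 1, the series ∑_{p=1}^{∞} A_p(β) x^p converges absolutely and its sum equals 2(cos(β·√(x/(1−x))) − 1). -/
open Finset Nat

theorem hasSum_choose_mul_pow_succ {𝕜 : Type*} [NormedField 𝕜] [CompleteSpace 𝕜]
    (m : ℕ) {x : 𝕜} (hx : ‖x‖ < 1) :
    HasSum (fun j : ℕ => (j.choose m : 𝕜) * x ^ (j + 1)) ((x / (1 - x)) ^ (m + 1)) := by
  have hvanish : ∑ j ∈ range m, (j.choose m : 𝕜) * x ^ (j + 1) = 0 :=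
    sum_eq_zero fun j hj => by
      rw [Nat.choose_eq_zero_of_lt (mem_range.1 hj), Nat.cast_zero, zero_mul]
  rw [← hasSum_nat_add_iff' m, hvanish, sub_zero, div_pow, div_eq_mul_one_div]
  convert! (hasSum_choose_mul_geometric_of_norm_lt_one m hx).mul_left (x ^ (m + 1)) using 2 with n
  ring

section BinomialTransform

variable {𝕜 : Type*} [RCLike 𝕜] (a : ℕ → 𝕜) {x : 𝕜}

theorem hasSum_sum_choose_mul_pow_succ (hx : ‖x‖ < 1)
    (ha : Summable fun m => ‖a m‖ * (‖x‖ / (1 - ‖x‖)) ^ (m + 1)) :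
    HasSum (fun j => (∑ m ∈ range (j + 1), a m * j.choose m) * x ^ (j + 1))
      (∑' m, a m * (x / (1 - x)) ^ (m + 1)) := by
  set f : ℕ × ℕ → 𝕜 := fun p => a p.1 * p.2.choose p.1 * x ^ (p.2 + 1)
  have hrow (m : ℕ) : HasSum (fun j => f (m, j)) (a m * (x / (1 - x)) ^ (m + 1)) := by
    simpa only [f, mul_assoc] using (hasSum_choose_mul_pow_succ m hx).mul_left (a m)
  have hrow_norm (m : ℕ) :
      HasSum (fun j => ‖f (m, j)‖) (‖a m‖ * (‖x‖ / (1 - ‖x‖)) ^ (m + 1)) := by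
    have hx' : ‖‖x‖‖ < 1 := by rwa [norm_norm]
    simpa only [f, norm_mul, norm_pow, RCLike.norm_natCast, mul_assoc]
      using (hasSum_choose_mul_pow_succ m hx').mul_left ‖a m‖
  have hf : Summable f := by
    refine Summable.of_norm <| (summable_prod_of_nonneg fun _ => norm_nonneg _).2
      ⟨fun m => (hrow_norm m).summable, ?_⟩
    simpa only [(hrow_norm _).tsum_eq] using ha
  have hcol (j : ℕ) :
      HasSum (fun m => f (m, j)) ((∑ m ∈ range (j + 1), a m * j.choose m) * x ^ (j + 1)) := by
    rw [sum_mul]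
    refine hasSum_sum_of_ne_finset_zero fun m hm => ?_
    rw [mem_range, not_lt, Nat.succ_le_iff] at hm
    simp [f, Nat.choose_eq_zero_of_lt hm]
  rw [(hf.hasSum.prod_fiberwise hrow).tsum_eq]
  exact ((Equiv.prodComm ℕ ℕ).hasSum_iff.2 hf.hasSum).prod_fiberwise hcol

theorem summable_norm_sum_choose_mul_pow_succ (hx : ‖x‖ < 1)
    (ha : Summable fun m => ‖a m‖ * (‖x‖ / (1 - ‖x‖)) ^ (m + 1)) :
    Summable fun j => ‖(∑ m ∈ range (j + 1), a m * j.choose m) * x ^ (j + 1)‖ := by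
  have hx' : ‖‖x‖‖ < 1 := by rwa [norm_norm]
  refine Summable.of_nonneg_of_le (fun _ => norm_nonneg _) (fun j => ?_)
    (hasSum_sum_choose_mul_pow_succ (fun m => ‖a m‖) hx' (by simpa only [norm_norm])).summable
  rw [norm_mul, norm_pow]
  gcongr
  refine (norm_sum_le _ _).trans_eq (sum_congr rfl fun m _ => ?_)
  rw [norm_mul, RCLike.norm_natCast]

end BinomialTransform

noncomputable def cosSubOneCoeff (β : ℝ) (m : ℕ) : ℝ :=
  (-1) ^ (m + 1) * β ^ (2 * (m + 1)) / (2 * (m + 1))!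

theorem A_succ (j : ℕ) (β : ℝ) :
    A (j + 1) β = 2 * ∑ m ∈ range (j + 1), cosSubOneCoeff β m * j.choose m := by
  rw [A, ← Ico_add_one_right_eq_Icc, sum_Ico_eq_sum_range, Nat.add_sub_cancel]
  simp [cosSubOneCoeff, add_comm 1]

theorem hasSum_cosSubOneCoeff_mul_pow (β : ℝ) {y : ℝ} (hy : 0 ≤ y) :
    HasSum (fun m => cosSubOneCoeff β m * y ^ (m + 1)) (Real.cos (β * √y) - 1) := by
  have h := (hasSum_nat_add_iff' 1).2 (Real.hasSum_cos (β * √y))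
  simp only [range_one, sum_singleton, pow_zero, mul_zero, factorial_zero, cast_one, div_one,
    mul_one] at h
  convert! h using 2 with m
  rw [cosSubOneCoeff, mul_pow, pow_mul √y, Real.sq_sqrt hy]
  ring

theorem summable_norm_cosSubOneCoeff_mul_pow (β : ℝ) {y : ℝ} (hy : 0 ≤ y) :
    Summable fun m => ‖cosSubOneCoeff β m‖ * y ^ (m + 1) := by
  refine ((summable_nat_add_iff 1).2 (Real.hasSum_cosh (β * √y)).summable).congr fun m => ?_
  rw [cosSubOneCoeff, mul_pow, pow_mul √y, Real.sq_sqrt hy, norm_div, norm_mul, norm_pow,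
    norm_neg, norm_one, one_pow, one_mul, RCLike.norm_natCast, Real.norm_eq_abs, abs_pow,
    (even_two_mul _).pow_abs]
  ring

theorem stmt_7_general (β : ℝ) (x : ℝ) (hx0 : 0 ≤ x) (hx1 : x < 1) :
    Summable (fun j : ℕ => |A (j + 1) β * x ^ (j + 1)|) ∧
    ∑' j : ℕ, A (j + 1) β * x ^ (j + 1) =
      2 * (Real.cos (β * Real.sqrt (x / (1 - x))) - 1) := by
  have hx : ‖x‖ < 1 := by rwa [Real.norm_of_nonneg hx0]
  have hy : 0 ≤ x / (1 - x) := div_nonneg hx0 (by linarith)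
  have ha : Summable fun m => ‖cosSubOneCoeff β m‖ * (‖x‖ / (1 - ‖x‖)) ^ (m + 1) := by
    rw [Real.norm_of_nonneg hx0]
    exact summable_norm_cosSubOneCoeff_mul_pow β hy
  have hterm (j : ℕ) : A (j + 1) β * x ^ (j + 1) =
      2 * ((∑ m ∈ range (j + 1), cosSubOneCoeff β m * j.choose m) * x ^ (j + 1)) := by
    rw [A_succ, mul_assoc]
  simp only [hterm]
  refine ⟨?_, ?_⟩
  · simpa only [abs_mul, abs_two, Real.norm_eq_abs]
      using (summable_norm_sum_choose_mul_pow_succ _ hx ha).mul_left 2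
  · rw [tsum_mul_left, (hasSum_sum_choose_mul_pow_succ _ hx ha).tsum_eq,
      (hasSum_cosSubOneCoeff_mul_pow β hy).tsum_eq]

/-- `∑_{p=1}^{∞} A_p(β) x^p` converges absolutely to `2(cos(β√(x/(1−x))) − 1)`
for `0 ≤ x < 1` (indexing `p = j + 1`). -/
theorem stmt_7 (β : ℝ) (hβ : 0 < β) (x : ℝ) (hx0 : 0 ≤ x) (hx1 : x < 1) :
    Summable (fun j : ℕ => |A (j + 1) β * x ^ (j + 1)|) ∧
    ∑' j : ℕ, A (j + 1) β * x ^ (j + 1) =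
      2 * (Real.cos (β * Real.sqrt (x / (1 - x))) - 1) :=
  stmt_7_general β x hx0 hx1
end

section
/- Let c ≠ 0 be a real number and let u, S : ℝ × ℝ → ℝ be infinitely differentiable with ∂²u/∂t²(x,t) = c²(∂²u/∂x²(x,t) + S(x,t)) for all (x,t). Then for every integer m ≥ 1 and all (x,t), (1/c²)^m ∂_t^{2m} u = ∂_x^{2m} u + ∑_{k=0}^{m−1} ∂_x^{2k} [ (1/c²)^{m−1−k} ∂_t^{2(m−1−k)} S ]. -/
noncomputable section WaveAux

/-- partial derivative in the first (space) variable -/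
def Dx (f : ℝ → ℝ → ℝ) : ℝ → ℝ → ℝ := fun x t => deriv (fun y => f y t) x
/-- partial derivative in the second (time) variable -/
def Dt (f : ℝ → ℝ → ℝ) : ℝ → ℝ → ℝ := fun x t => deriv (fun s => f x s) t

/-- smoothness of a curried function -/
def Sm (f : ℝ → ℝ → ℝ) : Prop := ContDiff ℝ (⊤ : ℕ∞) (fun p : ℝ × ℝ => f p.1 p.2)

lemma hasDerivAt_fst (f : ℝ → ℝ → ℝ) (hf : Sm f) (x t : ℝ) :
    HasDerivAt (fun y => f y t) (fderiv ℝ (fun p : ℝ × ℝ => f p.1 p.2) (x, t) (1, 0)) x := by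
  have h1 : HasDerivAt (fun y : ℝ => (y, t)) ((1 : ℝ), (0 : ℝ)) x :=
    (hasDerivAt_id x).prodMk (hasDerivAt_const x t)
  exact ((hf.differentiable (by simp) (x, t)).hasFDerivAt.comp_hasDerivAt x h1 : _)

lemma hasDerivAt_snd (f : ℝ → ℝ → ℝ) (hf : Sm f) (x t : ℝ) :
    HasDerivAt (fun s => f x s) (fderiv ℝ (fun p : ℝ × ℝ => f p.1 p.2) (x, t) (0, 1)) t := by
  have h1 : HasDerivAt (fun s : ℝ => (x, s)) ((0 : ℝ), (1 : ℝ)) t :=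
    (hasDerivAt_const t x).prodMk (hasDerivAt_id t)
  exact ((hf.differentiable (by simp) (x, t)).hasFDerivAt.comp_hasDerivAt t h1 : _)

lemma Dx_eq (f : ℝ → ℝ → ℝ) (hf : Sm f) (x t : ℝ) :
    Dx f x t = fderiv ℝ (fun p : ℝ × ℝ => f p.1 p.2) (x, t) (1, 0) :=
  (hasDerivAt_fst f hf x t).deriv

lemma Dt_eq (f : ℝ → ℝ → ℝ) (hf : Sm f) (x t : ℝ) :
    Dt f x t = fderiv ℝ (fun p : ℝ × ℝ => f p.1 p.2) (x, t) (0, 1) :=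
  (hasDerivAt_snd f hf x t).deriv

lemma Sm.dx {f : ℝ → ℝ → ℝ} (hf : Sm f) : Sm (Dx f) := by
  have : (fun p : ℝ × ℝ => Dx f p.1 p.2) =
      fun p : ℝ × ℝ => fderiv ℝ (fun q : ℝ × ℝ => f q.1 q.2) p (1, 0) := by
    funext p; exact Dx_eq f hf p.1 p.2
  rw [Sm, this]
  exact (hf.fderiv_right (by simp)).clm_apply contDiff_const

lemma Sm.dt {f : ℝ → ℝ → ℝ} (hf : Sm f) : Sm (Dt f) := by
  have : (fun p : ℝ × ℝ => Dt f p.1 p.2) =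
      fun p : ℝ × ℝ => fderiv ℝ (fun q : ℝ × ℝ => f q.1 q.2) p (0, 1) := by
    funext p; exact Dt_eq f hf p.1 p.2
  rw [Sm, this]
  exact (hf.fderiv_right (by simp)).clm_apply contDiff_const

/-- Clairaut / Schwarz: the two partial derivatives commute for smooth functions. -/
lemma swapDxDt (f : ℝ → ℝ → ℝ) (hf : Sm f) : Dx (Dt f) = Dt (Dx f) := by
  set F : ℝ × ℝ → ℝ := fun p => f p.1 p.2 with hF
  set G : ℝ × ℝ → ℝ × ℝ →L[ℝ] ℝ := fderiv ℝ F with hG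
  have hGsm : ContDiff ℝ (⊤ : ℕ∞) G := hf.fderiv_right (by simp)
  funext x t
  -- evaluation CLMs
  have happly : ∀ (v w : ℝ × ℝ) (z : ℝ × ℝ),
      HasDerivAt (fun y : ℝ => G (y, t) v) (fderiv ℝ G (x, t) (1, 0) v) x ∧
      HasDerivAt (fun s : ℝ => G (x, s) v) (fderiv ℝ G (x, t) (0, 1) v) t := by
    intro v w z
    constructor
    · have h1 : HasDerivAt (fun y : ℝ => (y, t)) ((1 : ℝ), (0 : ℝ)) x :=
        (hasDerivAt_id x).prodMk (hasDerivAt_const x t)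
      have h2 : HasDerivAt (fun y : ℝ => G (y, t)) (fderiv ℝ G (x, t) (1, 0)) x :=
        ((hGsm.differentiable (by simp) (x, t)).hasFDerivAt.comp_hasDerivAt x h1 : _)
      exact ((ContinuousLinearMap.apply ℝ ℝ v).hasFDerivAt.comp_hasDerivAt x h2 : _)
    · have h1 : HasDerivAt (fun s : ℝ => (x, s)) ((0 : ℝ), (1 : ℝ)) t :=
        (hasDerivAt_const t x).prodMk (hasDerivAt_id t)
      have h2 : HasDerivAt (fun s : ℝ => G (x, s)) (fderiv ℝ G (x, t) (0, 1)) t :=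
        ((hGsm.differentiable (by simp) (x, t)).hasFDerivAt.comp_hasDerivAt t h1 : _)
      exact ((ContinuousLinearMap.apply ℝ ℝ v).hasFDerivAt.comp_hasDerivAt t h2 : _)
  have hsymm : ∀ v w : ℝ × ℝ, fderiv ℝ G (x, t) v w = fderiv ℝ G (x, t) w v :=
    second_derivative_symmetric (fun y => (hf.differentiable (by simp) y).hasFDerivAt)
      (hGsm.differentiable (by simp) (x, t)).hasFDerivAt
  have e1 : Dx (Dt f) x t = fderiv ℝ G (x, t) (1, 0) (0, 1) := by
    have : (fun y => Dt f y t) = fun y => G (y, t) (0, 1) := by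
      funext y; exact Dt_eq f hf y t
    rw [Dx, this]
    exact ((happly (0, 1) 0 0).1).deriv
  have e2 : Dt (Dx f) x t = fderiv ℝ G (x, t) (0, 1) (1, 0) := by
    have : (fun s => Dx f x s) = fun s => G (x, s) (1, 0) := by
      funext s; exact Dx_eq f hf x s
    rw [Dt, this]
    exact ((happly (1, 0) 0 0).2).deriv
  rw [e1, e2, hsymm]

lemma Sm.dxIter {f : ℝ → ℝ → ℝ} (hf : Sm f) (n : ℕ) : Sm (Dx^[n] f) := by
  induction n generalizing f with
  | zero => exact hf
  | succ n ih => rw [Function.iterate_succ_apply]; exact ih hf.dx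

lemma Sm.dtIter {f : ℝ → ℝ → ℝ} (hf : Sm f) (n : ℕ) : Sm (Dt^[n] f) := by
  induction n generalizing f with
  | zero => exact hf
  | succ n ih => rw [Function.iterate_succ_apply]; exact ih hf.dt

lemma swapDxDtIter (f : ℝ → ℝ → ℝ) (hf : Sm f) (n : ℕ) : Dx (Dt^[n] f) = Dt^[n] (Dx f) := by
  induction n generalizing f with
  | zero => rfl
  | succ n ih =>
      rw [Function.iterate_succ_apply, Function.iterate_succ_apply, ih (Dt f) hf.dt, swapDxDt f hf]

lemma swapIterIter (f : ℝ → ℝ → ℝ) (hf : Sm f) (k n : ℕ) :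
    Dx^[k] (Dt^[n] f) = Dt^[n] (Dx^[k] f) := by
  induction k generalizing f with
  | zero => rfl
  | succ k ih =>
      rw [Function.iterate_succ_apply, Function.iterate_succ_apply, swapDxDtIter f hf n]
      exact ih (Dx f) hf.dx

lemma iterT (n : ℕ) (f : ℝ → ℝ → ℝ) (x t : ℝ) :
    iteratedDeriv n (fun s => f x s) t = Dt^[n] f x t := by
  induction n generalizing f with
  | zero => rfl
  | succ n ih =>
      rw [iteratedDeriv_succ', Function.iterate_succ_apply]
      exact ih (Dt f)

lemma iterX (n : ℕ) (f : ℝ → ℝ → ℝ) (x t : ℝ) :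
    iteratedDeriv n (fun y => f y t) x = Dx^[n] f x t := by
  induction n generalizing f with
  | zero => rfl
  | succ n ih =>
      rw [iteratedDeriv_succ', Function.iterate_succ_apply]
      have : deriv (fun y => f y t) = fun y => Dx f y t := rfl
      rw [this]
      exact ih (Dx f)

lemma Dt_comb (a : ℝ) (g h : ℝ → ℝ → ℝ) (hg : Sm g) (hh : Sm h) :
    Dt (fun x t => a * (g x t + h x t)) = fun x t => a * (Dt g x t + Dt h x t) := by
  funext x t
  have h1 := hasDerivAt_snd g hg x t
  have h2 := hasDerivAt_snd h hh x t
  have := ((h1.add h2).const_mul a).deriv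
  simpa [Dt, h1.deriv, h2.deriv] using this

lemma DtIter_comb (a : ℝ) (g h : ℝ → ℝ → ℝ) (hg : Sm g) (hh : Sm h) (n : ℕ) :
    Dt^[n] (fun x t => a * (g x t + h x t)) = fun x t => a * (Dt^[n] g x t + Dt^[n] h x t) := by
  induction n generalizing g h with
  | zero => rfl
  | succ n ih =>
      rw [Function.iterate_succ_apply, Dt_comb a g h hg hh, ih (Dt g) (Dt h) hg.dt hh.dt,
        Function.iterate_succ_apply, Function.iterate_succ_apply]

lemma Dx_const_mul (a : ℝ) (g : ℝ → ℝ → ℝ) (hg : Sm g) :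
    Dx (fun x t => a * g x t) = fun x t => a * Dx g x t := by
  funext x t
  have h1 := hasDerivAt_fst g hg x t
  have := (h1.const_mul a).deriv
  simpa [Dx, h1.deriv] using this

lemma DxIter_const_mul (a : ℝ) (g : ℝ → ℝ → ℝ) (hg : Sm g) (n : ℕ) :
    Dx^[n] (fun x t => a * g x t) = fun x t => a * Dx^[n] g x t := by
  induction n generalizing g with
  | zero => rfl
  | succ n ih =>
      rw [Function.iterate_succ_apply, Dx_const_mul a g hg, ih (Dx g) hg.dx,
        Function.iterate_succ_apply]

lemma Dx_comb (a : ℝ) (g h : ℝ → ℝ → ℝ) (hg : Sm g) (hh : Sm h) :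
    Dx (fun x t => a * (g x t + h x t)) = fun x t => a * (Dx g x t + Dx h x t) := by
  funext x t
  have h1 := hasDerivAt_fst g hg x t
  have h2 := hasDerivAt_fst h hh x t
  have := ((h1.add h2).const_mul a).deriv
  simpa [Dx, h1.deriv, h2.deriv] using this

lemma DxIter_comb (a : ℝ) (g h : ℝ → ℝ → ℝ) (hg : Sm g) (hh : Sm h) (n : ℕ) :
    Dx^[n] (fun x t => a * (g x t + h x t)) = fun x t => a * (Dx^[n] g x t + Dx^[n] h x t) := by
  induction n generalizing g h with
  | zero => rfl
  | succ n ih =>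
      rw [Function.iterate_succ_apply, Dx_comb a g h hg hh, ih (Dx g) (Dx h) hg.dx hh.dx,
        Function.iterate_succ_apply, Function.iterate_succ_apply]

/-- the key induction -/
lemma key (c : ℝ) (hc : c ≠ 0) : ∀ m : ℕ, ∀ u S : ℝ → ℝ → ℝ, Sm u → Sm S →
    (∀ x t, Dt^[2] u x t = c ^ 2 * (Dx^[2] u x t + S x t)) → ∀ x t : ℝ,
    (1 / c ^ 2) ^ (m + 1) * Dt^[2 * (m + 1)] u x t =
      Dx^[2 * (m + 1)] u x t +
        ∑ k ∈ Finset.range (m + 1), (1 / c ^ 2) ^ (m - k) * Dx^[2 * k] (Dt^[2 * (m - k)] S) x t := by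
  have hc2 : (c : ℝ) ^ 2 ≠ 0 := pow_ne_zero 2 hc
  intro m
  induction m with
  | zero =>
      intro u S hu hS hwave x t
      simp only [Finset.sum_range_one, Nat.sub_zero, pow_zero, mul_zero, Function.iterate_zero,
        id_eq, one_mul, pow_one, mul_one, Nat.zero_sub]
      rw [hwave x t]
      field_simp
      simp only [zero_add, pow_one, Finset.sum_range_one, mul_zero, Function.iterate_zero, id_eq,
        one_div, mul_inv_cancel₀ hc2, one_mul]
  | succ m ih =>
      intro u S hu hS hwave x t
      have hwf : Dt^[2] u = fun x t => c ^ 2 * (Dx^[2] u x t + S x t) := by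
        funext x t; exact hwave x t
      have hvsm : Sm (Dx^[2] u) := hu.dxIter 2
      have hS' : Sm (Dx^[2] S) := hS.dxIter 2
      -- wave equation for v := Dx^[2] u with source Dx^[2] S
      have hwv : ∀ x t, Dt^[2] (Dx^[2] u) x t =
          c ^ 2 * (Dx^[2] (Dx^[2] u) x t + Dx^[2] S x t) := by
        intro x t
        have h1 : Dt^[2] (Dx^[2] u) = Dx^[2] (Dt^[2] u) := (swapIterIter u hu 2 2).symm
        rw [h1, hwf, DxIter_comb (c ^ 2) (Dx^[2] u) S hvsm hS 2]
      have hIH := ih (Dx^[2] u) (Dx^[2] S) hvsm hS' hwv x t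
      have hDt : Dt^[2 * (m + 1 + 1)] u x t =
          c ^ 2 * (Dt^[2 * (m + 1)] (Dx^[2] u) x t + Dt^[2 * (m + 1)] S x t) := by
        rw [show 2 * (m + 1 + 1) = 2 * (m + 1) + 2 by ring, Function.iterate_add_apply, hwf,
          DtIter_comb (c ^ 2) (Dx^[2] u) S hvsm hS (2 * (m + 1))]
      have hDx : Dx^[2 * (m + 1 + 1)] u x t = Dx^[2 * (m + 1)] (Dx^[2] u) x t := by
        rw [show 2 * (m + 1 + 1) = 2 * (m + 1) + 2 by ring, Function.iterate_add_apply]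
      have hterm : ∀ k ∈ Finset.range (m + 1),
          (1 / c ^ 2) ^ (m - k) * Dx^[2 * k] (Dt^[2 * (m - k)] (Dx^[2] S)) x t =
          (1 / c ^ 2) ^ (m + 1 - (k + 1)) * Dx^[2 * (k + 1)] (Dt^[2 * (m + 1 - (k + 1))] S) x t := by
        intro k _
        have e1 : m + 1 - (k + 1) = m - k := by omega
        rw [e1, show 2 * (k + 1) = 2 * k + 2 by ring, Function.iterate_add_apply,
          swapIterIter S hS 2 (2 * (m - k))]
      rw [hDt, hDx, show (1 / c ^ 2 : ℝ) ^ (m + 1 + 1) *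
          (c ^ 2 * (Dt^[2 * (m + 1)] (Dx^[2] u) x t + Dt^[2 * (m + 1)] S x t)) =
          (1 / c ^ 2) ^ (m + 1) * Dt^[2 * (m + 1)] (Dx^[2] u) x t +
          (1 / c ^ 2) ^ (m + 1) * Dt^[2 * (m + 1)] S x t by
            rw [pow_succ, mul_assoc, ← mul_assoc (1 / c ^ 2), one_div_mul_cancel hc2, one_mul,
              mul_add],
        hIH, Finset.sum_range_succ'
          (fun k => (1 / c ^ 2) ^ (m + 1 - k) * Dx^[2 * k] (Dt^[2 * (m + 1 - k)] S) x t) (m + 1),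
        Finset.sum_congr rfl hterm]
      simp only [Nat.sub_zero, mul_zero, Function.iterate_zero, id_eq]
      ring

/-- For smooth solutions of the inhomogeneous wave equation `u_tt = c²(u_xx + S)`,
`(1/c²)^m ∂_t^{2m} u = ∂_x^{2m} u + ∑_{k=0}^{m−1} ∂_x^{2k}[(1/c²)^{m−1−k} ∂_t^{2(m−1−k)} S]`. -/
theorem stmt_11 (c : ℝ) (hc : c ≠ 0) (u S : ℝ → ℝ → ℝ)
    (hu : ContDiff ℝ (⊤ : ℕ∞) (fun p : ℝ × ℝ => u p.1 p.2))
    (hS : ContDiff ℝ (⊤ : ℕ∞) (fun p : ℝ × ℝ => S p.1 p.2))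
    (hwave : ∀ x t : ℝ,
      iteratedDeriv 2 (fun s => u x s) t =
        c ^ 2 * (iteratedDeriv 2 (fun y => u y t) x + S x t)) :
    ∀ m : ℕ, 1 ≤ m → ∀ x t : ℝ,
      (1 / c ^ 2) ^ m * iteratedDeriv (2 * m) (fun s => u x s) t =
        iteratedDeriv (2 * m) (fun y => u y t) x +
          ∑ k ∈ Finset.range m,
            iteratedDeriv (2 * k)
              (fun y => (1 / c ^ 2) ^ (m - 1 - k) *
                iteratedDeriv (2 * (m - 1 - k)) (fun s => S y s) t) x := by
  have hu' : Sm u := hu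
  have hS' : Sm S := hS
  intro m hm x t
  obtain ⟨m', rfl⟩ : ∃ m', m = m' + 1 := ⟨m - 1, by omega⟩
  have hw : ∀ x t, Dt^[2] u x t = c ^ 2 * (Dx^[2] u x t + S x t) := by
    intro x t
    have := hwave x t
    rwa [iterT 2 u x t, iterX 2 u x t] at this
  have hsum : ∀ k ∈ Finset.range (m' + 1),
      iteratedDeriv (2 * k)
        (fun y => (1 / c ^ 2) ^ (m' + 1 - 1 - k) *
          iteratedDeriv (2 * (m' + 1 - 1 - k)) (fun s => S y s) t) x =
      (1 / c ^ 2) ^ (m' - k) * Dx^[2 * k] (Dt^[2 * (m' - k)] S) x t := by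
    intro k _
    have e1 : m' + 1 - 1 - k = m' - k := by omega
    have h1 : (fun y => (1 / c ^ 2) ^ (m' + 1 - 1 - k) *
          iteratedDeriv (2 * (m' + 1 - 1 - k)) (fun s => S y s) t) =
        fun y => (fun a b => (1 / c ^ 2) ^ (m' - k) * Dt^[2 * (m' - k)] S a b) y t := by
      funext y; rw [e1, iterT]
    rw [h1]
    have h2 := iterX (2 * k)
      (fun a b => (1 / c ^ 2) ^ (m' - k) * Dt^[2 * (m' - k)] S a b) x t
    rw [h2, DxIter_const_mul _ _ (hS'.dtIter _) (2 * k)]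
  rw [iterT (2 * (m' + 1)) u x t, iterX (2 * (m' + 1)) u x t, Finset.sum_congr rfl hsum]
  exact key c hc m' u S hu' hS' hw x t

end WaveAux
end

section
/- For all real numbers x ≥ 0, y ≥ 0, z ≥ 0 and every integer m ≥ 1, setting c = (x+y+z)/((1+x)(1+y)(1+z)) and d = 1 − 1/((1+x)(1+y)(1+z)), the series ∑_{p=m}^{∞} C(p−1, m−1) d^{p−m} converges and (x+y+z)^m = c^m · ∑_{p=m}^{∞} C(p−1, m−1) d^{p−m}, where C(n,k) denotes the binomial coefficient. -/
/-! With `P = (1+x)(1+y)(1+z) ≥ 1` we have `d = 1 - 1/P ∈ [0, 1)`, so the negative binomial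
series gives `∑ⱼ C(m-1+j, m-1) dʲ = (1-d)⁻ᵐ = Pᵐ`, and `c = (x+y+z)/P`. -/

lemma hasSum_choose_mul_one_sub_inv_pow (k : ℕ) {P : ℝ} (hP : 1 / 2 < P) :
    HasSum (fun j : ℕ => ((k + j).choose k : ℝ) * (1 - 1 / P) ^ j) (P ^ (k + 1)) := by
  have hP0 : 0 < P := by linarith
  have hnorm : ‖1 - 1 / P‖ < 1 := by
    rw [Real.norm_eq_abs, abs_lt, one_div]
    constructor
    · linarith [(inv_lt_comm₀ hP0 two_pos).mpr (by linarith)]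
    · linarith [inv_pos.mpr hP0]
  have h := hasSum_choose_mul_geometric_of_norm_lt_one k hnorm
  rw [sub_sub_cancel, one_div_pow, one_div_one_div] at h
  simpa only [Nat.add_comm _ k] using h

lemma one_le_one_add_mul_one_add_mul_one_add {x y z : ℝ} (hx : 0 ≤ x) (hy : 0 ≤ y)
    (hz : 0 ≤ z) : 1 ≤ (1 + x) * (1 + y) * (1 + z) :=
  one_le_mul_of_one_le_of_one_le
    (one_le_mul_of_one_le_of_one_le (by linarith) (by linarith)) (by linarith)

/-- 3D ADI symbol identity: with `c = (x+y+z)/((1+x)(1+y)(1+z))` and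
`d = 1 − 1/((1+x)(1+y)(1+z))`, the series `∑_{p=m}^{∞} C(p−1,m−1) d^{p−m}` converges
(indexing `p = m + j`) and `(x+y+z)^m = c^m · ∑_{p=m}^{∞} C(p−1,m−1) d^{p−m}`. -/
theorem stmt_13 (x y z : ℝ) (hx : 0 ≤ x) (hy : 0 ≤ y) (hz : 0 ≤ z) (m : ℕ) (hm : 1 ≤ m) :
    ∃ s : ℝ,
      HasSum (fun j : ℕ =>
        ((m - 1 + j).choose (m - 1) : ℝ) * (1 - 1 / ((1 + x) * (1 + y) * (1 + z))) ^ j) s ∧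
      (x + y + z) ^ m = ((x + y + z) / ((1 + x) * (1 + y) * (1 + z))) ^ m * s := by
  have hP := one_le_one_add_mul_one_add_mul_one_add hx hy hz
  refine ⟨((1 + x) * (1 + y) * (1 + z)) ^ m, ?_, ?_⟩
  · obtain ⟨k, rfl⟩ : ∃ k, m = k + 1 := ⟨m - 1, by omega⟩
    simpa using hasSum_choose_mul_one_sub_inv_pow k (P := (1 + x) * (1 + y) * (1 + z))
      (by linarith)
  · rw [div_pow, div_mul_cancel₀ _ (by positivity)]
end

section
/- For all real numbers x ≥ 0, y ≥ 0 and every real β > 0, setting c = (x+y)/((1+x)(1+y)) and d = 1 − 1/((1+x)(1+y)), the iterated series ∑_{p=1}^{∞} ∑_{m=1}^{p} (−1)^m (2β^{2m}/(2m)!) C(p−1, m−1) c^m d^{p−m} converges and its sum equals 2(cos(β·√(x+y)) − 1), where C(n,k) denotes the binomial coefficient. -/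
/-!
Since `1 - d = 1 / ((1 + x) (1 + y))`, the negative binomial series
`∑ⱼ C(j + k, k) dʲ = (1 - d)^(-(k + 1))` turns `c^(k + 1)` into `(x + y)^(k + 1)`. Summing the
double series first over `j = p - m` with `k = m - 1` fixed, which is legitimate because the same
computation with absolute values shows absolute convergence, leaves the Taylor series of
`2 (cos (β √(x + y)) - 1)`.
-/

open Finset Nat

theorem HasSum.sum_antidiagonal {A α : Type*} [AddCommMonoid A] [HasAntidiagonal A]
    [AddCommMonoid α] [TopologicalSpace α] [ContinuousAdd α] [RegularSpace α]
    {f : A × A → α} {a : α} (hf : HasSum f a) :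
    HasSum (fun n ↦ ∑ p ∈ antidiagonal n, f p) a := by
  refine (HasAntidiagonal.sigmaAntidiagonalEquivProd.hasSum_iff.2 hf).sigma fun n ↦ ?_
  rw [← sum_coe_sort]
  exact hasSum_fintype _

theorem Finset.Nat.sum_Icc_one_eq_sum_antidiagonal {M : Type*} [AddCommMonoid M]
    (f : ℕ → ℕ → M) (q : ℕ) :
    ∑ m ∈ Icc 1 (q + 1), f m (q + 1 - m) = ∑ p ∈ antidiagonal q, f (p.1 + 1) p.2 := by
  rw [Nat.sum_antidiagonal_eq_sum_range_succ (fun i j ↦ f (i + 1) j),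
    ← Ico_add_one_right_eq_Icc, sum_Ico_eq_sum_range, Nat.add_sub_cancel]
  exact sum_congr rfl fun m _ ↦ by congr 1 <;> omega

theorem Real.hasSum_cos_mul_sqrt (β : ℝ) {t : ℝ} (ht : 0 ≤ t) :
    HasSum (fun n : ℕ ↦ (-1) ^ n * β ^ (2 * n) / (2 * n)! * t ^ n) (cos (β * √t)) := by
  convert Real.hasSum_cos (β * √t) using 2 with n
  rw [mul_pow, pow_mul (√t), Real.sq_sqrt ht]
  ring

theorem hasSum_sum_antidiagonal_choose_mul_geometric {𝕜 : Type*} [RCLike 𝕜]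
    {b : ℕ → 𝕜} {d s : 𝕜} (hd : ‖d‖ < 1)
    (hb : HasSum (fun n ↦ b n / (1 - d) ^ (n + 1)) s)
    (hb_norm : Summable fun n ↦ ‖b n‖ / (1 - ‖d‖) ^ (n + 1)) :
    HasSum (fun q ↦ ∑ p ∈ antidiagonal q, (q.choose p.1 : 𝕜) * b p.1 * d ^ p.2) s := by
  set G : ℕ × ℕ → 𝕜 := fun p ↦ b p.1 * ((p.2 + p.1).choose p.1 * d ^ p.2)
  have hfiber (n : ℕ) : HasSum (fun j ↦ G (n, j)) (b n / (1 - d) ^ (n + 1)) := by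
    rw [div_eq_mul_one_div]
    exact (hasSum_choose_mul_geometric_of_norm_lt_one n hd).mul_left (b n)
  have hfiber_norm (n : ℕ) :
      HasSum (fun j ↦ ‖G (n, j)‖) (‖b n‖ / (1 - ‖d‖) ^ (n + 1)) := by
    have hd' : ‖‖d‖‖ < 1 := by rwa [norm_norm]
    rw [div_eq_mul_one_div]
    simpa only [G, norm_mul, norm_pow, RCLike.norm_natCast] using
      (hasSum_choose_mul_geometric_of_norm_lt_one n hd').mul_left ‖b n‖
  have hG : Summable G := by
    refine Summable.of_norm ((summable_prod_of_nonneg fun _ ↦ norm_nonneg _).2 ⟨?_, ?_⟩)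
    · exact fun n ↦ (hfiber_norm n).summable
    · simpa only [fun n ↦ (hfiber_norm n).tsum_eq] using hb_norm
  have hGs : HasSum G s := hb.unique (hG.hasSum.prod_fiberwise hfiber) ▸ hG.hasSum
  refine hGs.sum_antidiagonal.congr_fun fun q ↦ sum_congr rfl fun p hp ↦ ?_
  rw [HasAntidiagonal.mem_antidiagonal] at hp
  simp only [G, add_comm p.2, hp]
  ring

theorem stmt_14_general (x y : ℝ) (hx : 0 ≤ x) (hy : 0 ≤ y) (β : ℝ) :
    HasSum (fun q : ℕ =>
        ∑ m ∈ Finset.Icc 1 (q + 1),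
          (-1 : ℝ) ^ m * (2 * β ^ (2 * m) / (Nat.factorial (2 * m))) *
            (q.choose (m - 1)) *
            ((x + y) / ((1 + x) * (1 + y))) ^ m *
            (1 - 1 / ((1 + x) * (1 + y))) ^ (q + 1 - m))
      (2 * (Real.cos (β * Real.sqrt (x + y)) - 1)) := by
  set D := (1 + x) * (1 + y)
  set c := (x + y) / D
  set d := 1 - 1 / D
  have hD : 1 ≤ D := by nlinarith
  have hd0 : 0 ≤ d := sub_nonneg.2 (div_le_one_of_le₀ hD (by linarith))
  have hd1 : 1 - d = D⁻¹ := by simp [d]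
  have hd1_pos : 0 < 1 - d := by rw [hd1]; positivity
  set b : ℕ → ℝ := fun n ↦
    (-1) ^ (n + 1) * (2 * β ^ (2 * (n + 1)) / (2 * (n + 1))!) * c ^ (n + 1)
  have hcos : HasSum (fun n ↦ b n / (1 - d) ^ (n + 1)) (2 * (Real.cos (β * √(x + y)) - 1)) := by
    have h := (hasSum_nat_add_iff' 1).2
      ((Real.hasSum_cos_mul_sqrt β (add_nonneg hx hy)).mul_left 2)
    simp only [sum_range_one, pow_zero, mul_zero, factorial_zero, cast_one, div_one,
      mul_one] at h
    rw [mul_sub, mul_one]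
    refine h.congr_fun fun n ↦ ?_
    simp only [b, c, hd1, inv_pow, div_inv_eq_mul, div_pow]
    field_simp
  have hb_norm : Summable fun n ↦ ‖b n‖ / (1 - ‖d‖) ^ (n + 1) := by
    simpa [Real.norm_eq_abs, abs_of_nonneg hd0, abs_div, abs_of_pos hd1_pos]
      using hcos.summable.abs
  have hd : ‖d‖ < 1 := by
    rw [Real.norm_eq_abs, abs_of_nonneg hd0]
    linarith
  refine (hasSum_sum_antidiagonal_choose_mul_geometric hd hcos hb_norm).congr_fun fun q ↦ ?_
  rw [Finset.Nat.sum_Icc_one_eq_sum_antidiagonal (fun m k ↦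
    (-1 : ℝ) ^ m * (2 * β ^ (2 * m) / (2 * m)!) * (q.choose (m - 1) : ℝ) * c ^ m * d ^ k)]
  refine sum_congr rfl fun p _ ↦ ?_
  simp only [b, Nat.add_sub_cancel]
  ring

/-- The full untruncated 2D ADI expansion reproduces the exact semi-discrete evolution
at the Fourier-symbol level: with `c = (x+y)/((1+x)(1+y))`, `d = 1 − 1/((1+x)(1+y))`,
`∑_{p=1}^{∞} ∑_{m=1}^{p} (−1)^m (2β^{2m}/(2m)!) C(p−1,m−1) c^m d^{p−m}
  = 2(cos(β√(x+y)) − 1)` (outer index `p = q + 1`). -/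
theorem stmt_14 (x y : ℝ) (hx : 0 ≤ x) (hy : 0 ≤ y) (β : ℝ) (hβ : 0 < β) :
    HasSum (fun q : ℕ =>
        ∑ m ∈ Finset.Icc 1 (q + 1),
          (-1 : ℝ) ^ m * (2 * β ^ (2 * m) / (Nat.factorial (2 * m))) *
            (q.choose (m - 1)) *
            ((x + y) / ((1 + x) * (1 + y))) ^ m *
            (1 - 1 / ((1 + x) * (1 + y))) ^ (q + 1 - m))
      (2 * (Real.cos (β * Real.sqrt (x + y)) - 1)) :=
  stmt_14_general x y hx hy β
end

section
/- Let β_max = √(12 − 4√6). Then 2β_max² − β_max⁴/12 = 4, and for every real β with 0 < β ≤ β_max and every real D̂ with 0 ≤ D̂ ≤ 1, every complex root ρ of the equation ρ² − 2ρ + 1 = −ρ(β² D̂ + (β² − β⁴/12) D̂²) satisfies |ρ| ≤ 1. -/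
/-!
Write `c = β² D̂ + (β² − β⁴/12) D̂²`, so that the characteristic equation reads
`ρ² − (2 − c) ρ + 1 = 0`. A monic real quadratic with constant term `1` and `|2 − c| ≤ 2` has both
roots on the unit circle, so it suffices that `0 ≤ c ≤ 4`. Both coefficients of `c` are nonnegative
for `β² ≤ 12`, hence `c ≤ 2β² − β⁴/12`, and `2x − x²/12 − 4 = −(x − (12 − 4√6))(x − (12 + 4√6))/12`
is nonpositive for `x = β² ≤ 12 − 4√6`.
-/

open Real

lemma Complex.norm_eq_one_of_sq_sub_mul_add_one_eq_zero_s16 {a : ℝ} (ha : a ^ 2 ≤ 4) {ρ : ℂ}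
    (h : ρ ^ 2 - a * ρ + 1 = 0) : ‖ρ‖ = 1 := by
  have hre : ρ.re ^ 2 - ρ.im ^ 2 - a * ρ.re + 1 = 0 := by
    simpa [pow_two] using congrArg Complex.re h
  have him : ρ.im * (2 * ρ.re - a) = 0 := by
    have := congrArg Complex.im h
    simp only [pow_two, Complex.sub_im, Complex.add_im, Complex.mul_im, Complex.ofReal_re,
      Complex.ofReal_im, Complex.one_im, Complex.zero_im] at this
    linear_combination this
  -- A real root would be a double root, and the real part of a nonreal one is half the trace.
  have hmid : 2 * ρ.re = a := by
    rcases mul_eq_zero.mp him with hy | hx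
    · have : (2 * ρ.re - a) ^ 2 = a ^ 2 - 4 := by rw [hy] at hre; linear_combination 4 * hre
      nlinarith [sq_nonneg (2 * ρ.re - a)]
    · linarith
  have hnormSq : Complex.normSq ρ = 1 := by
    rw [Complex.normSq_apply]
    subst hmid
    linear_combination -hre
  rw [← Real.sqrt_one, ← hnormSq, Complex.norm_def]

lemma mul_add_mul_sq_le_add {A B D : ℝ} (hA : 0 ≤ A) (hB : 0 ≤ B) (hD₀ : 0 ≤ D) (hD₁ : D ≤ 1) :
    A * D + B * D ^ 2 ≤ A + B := by
  have hD2 : D ^ 2 ≤ 1 := pow_le_one₀ hD₀ hD₁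
  nlinarith

lemma sq_sqrt_twelve_sub_four_mul_sqrt_six :
    √(12 - 4 * √6) ^ 2 = 12 - 4 * √6 := by
  have : √6 ≤ 3 := Real.sqrt_le_iff.mpr ⟨by norm_num, by norm_num⟩
  exact Real.sq_sqrt (by linarith)

lemma two_mul_sub_sq_div_twelve_le_four {x : ℝ} (hx : x ≤ 12 - 4 * √6) :
    2 * x - x ^ 2 / 12 ≤ 4 := by
  have h6 : √6 ^ 2 = 6 := Real.sq_sqrt (by norm_num)
  have hfactor : 2 * x - x ^ 2 / 12 - 4 = -((x - (12 - 4 * √6)) * (x - (12 + 4 * √6))) / 12 := by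
    linear_combination (-4 / 3 : ℝ) * h6
  have : 0 ≤ (x - (12 - 4 * √6)) * (x - (12 + 4 * √6)) :=
    mul_nonneg_of_nonpos_of_nonpos (by linarith) (by linarith [Real.sqrt_nonneg 6])
  linarith

/-- A-stability of the fourth-order (P = 2) scheme, with sharp threshold
`β_max = √(12 − 4√6)`. -/
theorem stmt_16 :
    2 * Real.sqrt (12 - 4 * Real.sqrt 6) ^ 2 - Real.sqrt (12 - 4 * Real.sqrt 6) ^ 4 / 12 = 4 ∧
    ∀ β : ℝ, 0 < β → β ≤ Real.sqrt (12 - 4 * Real.sqrt 6) →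
      ∀ D : ℝ, 0 ≤ D → D ≤ 1 →
        ∀ ρ : ℂ, ρ ^ 2 - 2 * ρ + 1 =
            -ρ * ((β ^ 2 * D + (β ^ 2 - β ^ 4 / 12) * D ^ 2 : ℝ) : ℂ) →
          ‖ρ‖ ≤ 1 := by
  have hβmax := sq_sqrt_twelve_sub_four_mul_sqrt_six
  constructor
  · have h6 : √6 ^ 2 = 6 := Real.sq_sqrt (by norm_num)
    rw [show √(12 - 4 * √6) ^ 4 = (√(12 - 4 * √6) ^ 2) ^ 2 by ring, hβmax]
    linear_combination (-4 / 3 : ℝ) * h6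
  intro β hβ hβle D hD₀ hD₁ ρ h
  have hβ2 : β ^ 2 ≤ 12 - 4 * √6 := hβmax ▸ pow_le_pow_left₀ hβ.le hβle 2
  have hB : 0 ≤ β ^ 2 - β ^ 4 / 12 := by nlinarith [Real.sqrt_nonneg 6, sq_nonneg β]
  set c := β ^ 2 * D + (β ^ 2 - β ^ 4 / 12) * D ^ 2
  have hc₀ : 0 ≤ c := by positivity
  have hc₄ : c ≤ 4 := calc
    c ≤ β ^ 2 + (β ^ 2 - β ^ 4 / 12) := mul_add_mul_sq_le_add (sq_nonneg β) hB hD₀ hD₁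
    _ = 2 * β ^ 2 - (β ^ 2) ^ 2 / 12 := by ring
    _ ≤ 4 := two_mul_sub_sq_div_twelve_le_four hβ2
  refine (Complex.norm_eq_one_of_sq_sub_mul_add_one_eq_zero_s16 (a := 2 - c) (by nlinarith) ?_).le
  push_cast
  linear_combination h
end

section
/- For every real β > 0, every integer P ≥ 1, and every real r with 0 < r < 1, there exists a constant K > 0 such that for all x ∈ [0, r], |2(cos(β·√(x/(1−x))) − 1) − ∑_{p=1}^{P} A_p(β) x^p| ≤ K · x^{P+1}. -/
/-!
Write `u = x / (1 - x)`. Then `cos (β √u) = ∑ cₘ uᵐ` with `cₘ = (-1)ᵐ β²ᵐ / (2m)!`, and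
`u^(k+1) = x · xᵏ / (1 - x)^(k+1) = x ∑_q C(q, k) x^q`; truncating both expansions at order `P`
and collecting powers of `x` gives exactly `∑_{p ≤ P} A_p xᵖ`. The error is thus the tail of the
cosine series beyond `u^P` plus, for each `k < P`, a tail beyond `x^P` of a binomial series.
A tail of `∑ aₙ tⁿ` from `N` on, with `|aₙ| ≤ bₙ` and `0 ≤ t ≤ R`, is at most
`(t / R)ᴺ ∑ bₙ Rⁿ`; comparing with `x = r`, `u = r / (1 - r)` and dominating `|cₘ|` by the
coefficients of `cosh` gives `K = 4 cosh (β √(r / (1 - r))) / r^(P+1)`.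
-/

open Finset

lemma hasSum_choose_mul_pow {𝕜 : Type*} [NormedField 𝕜] [CompleteSpace 𝕜] (k : ℕ) {x : 𝕜}
    (hx : ‖x‖ < 1) :
    HasSum (fun n ↦ (n.choose k : 𝕜) * x ^ n) (x ^ k / (1 - x) ^ (k + 1)) := by
  have hgeom := (hasSum_choose_mul_geometric_of_norm_lt_one k hx).mul_left (x ^ k)
  rw [mul_one_div] at hgeom
  rw [← hasSum_nat_add_iff' k, sum_eq_zero fun n hn ↦ by
    rw [Nat.choose_eq_zero_of_lt (mem_range.mp hn), Nat.cast_zero, zero_mul], sub_zero]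
  have hterm (n : ℕ) :
      x ^ k * ((n + k).choose k * x ^ n) = ((n + k).choose k : 𝕜) * x ^ (n + k) := by
    ring
  simpa only [hterm] using hgeom

lemma abs_sub_sum_range_le_of_hasSum {a b : ℕ → ℝ} {t R S T : ℝ} (N : ℕ) (ht : 0 ≤ t)
    (hR : 0 < R) (htR : t ≤ R) (hab : ∀ n, |a n| ≤ b n) (hS : HasSum (fun n ↦ a n * t ^ n) S)
    (hT : HasSum (fun n ↦ b n * R ^ n) T) :
    |S - ∑ n ∈ range N, a n * t ^ n| ≤ (t / R) ^ N * T := by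
  have hb : ∀ n, 0 ≤ b n := fun n ↦ (abs_nonneg _).trans (hab n)
  have htail_le : ∀ n, ‖a (n + N) * t ^ (n + N)‖ ≤ (t / R) ^ N * (b (n + N) * R ^ (n + N)) := by
    intro n
    have hpow : t ^ (n + N) ≤ (t / R) ^ N * R ^ (n + N) :=
      calc t ^ (n + N) = t ^ n * t ^ N := pow_add _ _ _
        _ ≤ R ^ n * t ^ N := by gcongr
        _ = (t / R) ^ N * R ^ (n + N) := by
          rw [div_pow, pow_add]
          field_simp
    rw [Real.norm_eq_abs, abs_mul, abs_of_nonneg (pow_nonneg ht _)]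
    calc |a (n + N)| * t ^ (n + N) ≤ b (n + N) * ((t / R) ^ N * R ^ (n + N)) := by
          gcongr
          exacts [hb _, hab _]
      _ = _ := by ring
  calc |S - ∑ n ∈ range N, a n * t ^ n|
      ≤ (t / R) ^ N * (T - ∑ n ∈ range N, b n * R ^ n) :=
        ((hasSum_nat_add_iff' N).mpr hS).norm_le_of_bounded
          (((hasSum_nat_add_iff' N).mpr hT).mul_left _) htail_le
    _ ≤ (t / R) ^ N * T := by
        have hhead : 0 ≤ ∑ n ∈ range N, b n * R ^ n :=
          sum_nonneg fun n _ ↦ mul_nonneg (hb n) (pow_nonneg hR.le n)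
        gcongr
        exact sub_le_self _ hhead

noncomputable def cosSqrtCoeff (β : ℝ) (m : ℕ) : ℝ :=
  (-1) ^ m * β ^ (2 * m) / (2 * m).factorial

lemma abs_cosSqrtCoeff (β : ℝ) (m : ℕ) :
    |cosSqrtCoeff β m| = β ^ (2 * m) / (2 * m).factorial := by
  rw [cosSqrtCoeff, abs_div, abs_mul, abs_pow, abs_neg, abs_one, one_pow, one_mul,
    pow_mul, abs_of_nonneg (pow_nonneg (sq_nonneg β) m), Nat.abs_cast]

lemma mul_sqrt_pow_two_mul (β : ℝ) {u : ℝ} (hu : 0 ≤ u) (m : ℕ) :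
    (β * √u) ^ (2 * m) = β ^ (2 * m) * u ^ m := by
  rw [mul_pow, pow_mul √u, Real.sq_sqrt hu]

lemma hasSum_cosSqrtCoeff_mul_pow (β : ℝ) {u : ℝ} (hu : 0 ≤ u) :
    HasSum (fun m ↦ cosSqrtCoeff β m * u ^ m) (Real.cos (β * √u)) := by
  have hterm (m : ℕ) : (-1) ^ m * (β * √u) ^ (2 * m) / (2 * m).factorial
      = cosSqrtCoeff β m * u ^ m := by
    rw [mul_sqrt_pow_two_mul β hu, cosSqrtCoeff]
    ring
  simpa only [hterm] using Real.hasSum_cos (β * √u)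

lemma hasSum_abs_cosSqrtCoeff_mul_pow (β : ℝ) {u : ℝ} (hu : 0 ≤ u) :
    HasSum (fun m ↦ |cosSqrtCoeff β m| * u ^ m) (Real.cosh (β * √u)) := by
  have hterm (m : ℕ) : (β * √u) ^ (2 * m) / (2 * m).factorial = |cosSqrtCoeff β m| * u ^ m := by
    rw [mul_sqrt_pow_two_mul β hu, abs_cosSqrtCoeff]
    ring
  simpa only [hterm] using Real.hasSum_cosh (β * √u)

lemma sum_Icc_one_eq_sum_range {M : Type*} [AddCommMonoid M] (f : ℕ → M) (n : ℕ) :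
    ∑ p ∈ Icc 1 n, f p = ∑ q ∈ range n, f (q + 1) := by
  rw [range_eq_Ico, sum_Ico_add' f 0 n 1, zero_add, Ico_add_one_right_eq_Icc]

lemma A_succ_eq_sum_range {q P : ℕ} (hqP : q < P) (β : ℝ) :
    A (q + 1) β = 2 * ∑ k ∈ range P, cosSqrtCoeff β (k + 1) * q.choose k := by
  rw [A, sum_Icc_one_eq_sum_range]
  simp only [Nat.add_sub_cancel]
  congr 1
  refine sum_subset (range_subset_range.mpr hqP) fun k _ hk ↦ ?_
  rw [Nat.choose_eq_zero_of_lt (by simpa using hk), Nat.cast_zero, mul_zero]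

lemma sum_Icc_A_mul_pow (β x : ℝ) (P : ℕ) :
    ∑ p ∈ Icc 1 P, A p β * x ^ p
      = 2 * ∑ k ∈ range P, cosSqrtCoeff β (k + 1) * (x * ∑ q ∈ range P, q.choose k * x ^ q) := by
  rw [sum_Icc_one_eq_sum_range,
    sum_congr rfl fun q hq ↦ by rw [A_succ_eq_sum_range (mem_range.mp hq)]]
  simp only [mul_sum, sum_mul]
  rw [sum_comm]
  refine sum_congr rfl fun k _ ↦ sum_congr rfl fun q _ ↦ ?_
  ring

lemma two_mul_cos_sub_one_sub_sum_A (β x : ℝ) (P : ℕ) :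
    2 * (Real.cos (β * √(x / (1 - x))) - 1) - ∑ p ∈ Icc 1 P, A p β * x ^ p
      = 2 * (Real.cos (β * √(x / (1 - x)))
          - ∑ m ∈ range (P + 1), cosSqrtCoeff β m * (x / (1 - x)) ^ m)
        + 2 * ∑ k ∈ range P, cosSqrtCoeff β (k + 1) *
            (x * (x ^ k / (1 - x) ^ (k + 1) - ∑ q ∈ range P, q.choose k * x ^ q)) := by
  have hpow (k : ℕ) : (x / (1 - x)) ^ (k + 1) = x * (x ^ k / (1 - x) ^ (k + 1)) := by
    rw [div_pow, pow_succ]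
    ring
  have hc0 : cosSqrtCoeff β 0 = 1 := by simp [cosSqrtCoeff]
  rw [sum_Icc_A_mul_pow, sum_range_succ', hc0]
  simp only [hpow, mul_sub, sum_sub_distrib]
  ring

lemma abs_geom_choose_sub_sum_le (k N : ℕ) {x r : ℝ} (hx : 0 ≤ x) (hr0 : 0 < r) (hxr : x ≤ r)
    (hr1 : r < 1) :
    |x ^ k / (1 - x) ^ (k + 1) - ∑ q ∈ range N, q.choose k * x ^ q|
      ≤ (x / r) ^ N * (r ^ k / (1 - r) ^ (k + 1)) := by
  have hnorm {t : ℝ} (ht : 0 ≤ t) (htr : t ≤ r) : ‖t‖ < 1 := by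
    rw [Real.norm_of_nonneg ht]
    linarith
  exact abs_sub_sum_range_le_of_hasSum N hx hr0 hxr
    (fun n ↦ (abs_of_nonneg (Nat.cast_nonneg (n.choose k))).le)
    (hasSum_choose_mul_pow k (hnorm hx hxr)) (hasSum_choose_mul_pow k (hnorm hr0.le le_rfl))

lemma sum_range_abs_cosSqrtCoeff_succ_le (β : ℝ) {R : ℝ} (hR : 0 ≤ R) (P : ℕ) :
    ∑ k ∈ range P, |cosSqrtCoeff β (k + 1)| * R ^ (k + 1) ≤ Real.cosh (β * √R) :=
  calc ∑ k ∈ range P, |cosSqrtCoeff β (k + 1)| * R ^ (k + 1)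
      ≤ ∑ m ∈ range (P + 1), |cosSqrtCoeff β m| * R ^ m := by
        rw [sum_range_succ']
        exact le_add_of_nonneg_right (by positivity)
    _ ≤ Real.cosh (β * √R) :=
        sum_le_hasSum _ (fun m _ ↦ by positivity) (hasSum_abs_cosSqrtCoeff_mul_pow β hR)

lemma abs_sum_cosSqrtCoeff_mul_geom_tail_le (β : ℝ) (P : ℕ) {x r : ℝ} (hx : 0 ≤ x)
    (hr0 : 0 < r) (hxr : x ≤ r) (hr1 : r < 1) :
    |∑ k ∈ range P, cosSqrtCoeff β (k + 1) *
        (x * (x ^ k / (1 - x) ^ (k + 1) - ∑ q ∈ range P, q.choose k * x ^ q))|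
      ≤ (x / r) ^ (P + 1) * Real.cosh (β * √(r / (1 - r))) := by
  have h1r : 1 - r ≠ 0 := by linarith
  have hterm (k : ℕ) : |cosSqrtCoeff β (k + 1) *
      (x * (x ^ k / (1 - x) ^ (k + 1) - ∑ q ∈ range P, q.choose k * x ^ q))|
      ≤ (x / r) ^ (P + 1) * (|cosSqrtCoeff β (k + 1)| * (r / (1 - r)) ^ (k + 1)) :=
    calc _ = |cosSqrtCoeff β (k + 1)| *
          (x * |x ^ k / (1 - x) ^ (k + 1) - ∑ q ∈ range P, q.choose k * x ^ q|) := by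
          rw [abs_mul, abs_mul, abs_of_nonneg hx]
      _ ≤ |cosSqrtCoeff β (k + 1)| * (x * ((x / r) ^ P * (r ^ k / (1 - r) ^ (k + 1)))) := by
          gcongr
          exact abs_geom_choose_sub_sum_le k P hx hr0 hxr hr1
      _ = _ := by
          rw [div_pow, div_pow, div_pow]
          field_simp
          ring
  calc _ ≤ ∑ k ∈ range P, (x / r) ^ (P + 1) *
        (|cosSqrtCoeff β (k + 1)| * (r / (1 - r)) ^ (k + 1)) :=
        (abs_sum_le_sum_abs _ _).trans (sum_le_sum fun k _ ↦ hterm k)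
    _ ≤ (x / r) ^ (P + 1) * Real.cosh (β * √(r / (1 - r))) := by
        rw [← mul_sum]
        gcongr
        exact sum_range_abs_cosSqrtCoeff_succ_le β (by positivity) P

lemma abs_cos_sqrt_sub_sum_range_le (β : ℝ) (N : ℕ) {x r : ℝ} (hx : 0 ≤ x) (hr0 : 0 < r)
    (hxr : x ≤ r) (hr1 : r < 1) :
    |Real.cos (β * √(x / (1 - x))) - ∑ m ∈ range N, cosSqrtCoeff β m * (x / (1 - x)) ^ m|
      ≤ (x / r) ^ N * Real.cosh (β * √(r / (1 - r))) := by
  have h1r : 0 < 1 - r := by linarith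
  have h1x : 0 < 1 - x := by linarith
  have huR : x / (1 - x) ≤ r / (1 - r) := div_le_div₀ hr0.le hxr h1r (by linarith)
  have hratio : x / (1 - x) / (r / (1 - r)) ≤ x / r :=
    calc x / (1 - x) / (r / (1 - r)) = x / r * ((1 - r) / (1 - x)) := by field_simp
      _ ≤ x / r := mul_le_of_le_one_right (by positivity) ((div_le_one h1x).mpr (by linarith))
  calc _ ≤ (x / (1 - x) / (r / (1 - r))) ^ N * Real.cosh (β * √(r / (1 - r))) :=
        abs_sub_sum_range_le_of_hasSum N (by positivity) (by positivity) huR (fun _ ↦ le_rfl)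
          (hasSum_cosSqrtCoeff_mul_pow β (by positivity))
          (hasSum_abs_cosSqrtCoeff_mul_pow β (by positivity))
    _ ≤ _ := by gcongr

theorem stmt_17_general (β : ℝ) (P : ℕ) (r : ℝ)
    (hr0 : 0 < r) (hr1 : r < 1) :
    ∃ K : ℝ, 0 < K ∧ ∀ x : ℝ, x ∈ Set.Icc (0 : ℝ) r →
      |2 * (Real.cos (β * Real.sqrt (x / (1 - x))) - 1) -
        ∑ p ∈ Finset.Icc 1 P, A p β * x ^ p| ≤ K * x ^ (P + 1) := by
  set C := Real.cosh (β * √(r / (1 - r)))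
  refine ⟨4 * C / r ^ (P + 1), by positivity, fun x ⟨hx0, hxr⟩ ↦ ?_⟩
  rw [two_mul_cos_sub_one_sub_sum_A]
  calc _ ≤ 2 * |Real.cos (β * √(x / (1 - x)))
          - ∑ m ∈ range (P + 1), cosSqrtCoeff β m * (x / (1 - x)) ^ m|
        + 2 * |∑ k ∈ range P, cosSqrtCoeff β (k + 1) *
            (x * (x ^ k / (1 - x) ^ (k + 1) - ∑ q ∈ range P, q.choose k * x ^ q))| := by
        refine (abs_add_le _ _).trans_eq ?_
        rw [abs_mul, abs_mul, abs_two]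
    _ ≤ 2 * ((x / r) ^ (P + 1) * C) + 2 * ((x / r) ^ (P + 1) * C) := by
        gcongr
        exacts [abs_cos_sqrt_sub_sum_range_le β (P + 1) hx0 hr0 hxr hr1,
          abs_sum_cosSqrtCoeff_mul_geom_tail_le β P hx0 hr0 hxr hr1]
    _ = 4 * C / r ^ (P + 1) * x ^ (P + 1) := by
        rw [div_pow]
        ring

/-- The P-term truncation of the scheme's symbol approximates the exact symbol
`2(cos(β√(x/(1−x))) − 1)` to order `x^{P+1}` uniformly on `[0, r]`, `r < 1`. -/
theorem stmt_17 (β : ℝ) (hβ : 0 < β) (P : ℕ) (hP : 1 ≤ P) (r : ℝ)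
    (hr0 : 0 < r) (hr1 : r < 1) :
    ∃ K : ℝ, 0 < K ∧ ∀ x : ℝ, x ∈ Set.Icc (0 : ℝ) r →
      |2 * (Real.cos (β * Real.sqrt (x / (1 - x))) - 1) -
        ∑ p ∈ Finset.Icc 1 P, A p β * x ^ p| ≤ K * x ^ (P + 1) :=
  stmt_17_general β P r hr0 hr1
end
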